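/- arXiv:1206.5213 — 2 statements merged into one kernel-verified Lean document; each statement's English description precedes it below -/
import Mathlib

section
/- For every x⁰ ∈ 𝔸_f and ε > 0, the closed ball B_ε(x⁰) = { x ∈ 𝔸_f : ‖x − x⁰‖ ≤ ε } equals the product ∏_p (x⁰_p + p^{-α_p(ε)} ℤ_p), where α_p(ε) = [[log_p ε]]; in particular B_ε(x⁰) is compact. -/
open Filter MeasureTheory
open scoped Classical

noncomputable section

instance (p : Nat.Primes) : Fact (p.1.Prime) := ⟨p.2⟩

/-- The finite adele ring of `ℚ`, realized as the restricted product of the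
fields `ℚ_[p]` with respect to the rings `ℤ_[p]`. -/
def adeleSubring : Subring (Π p : Nat.Primes, ℚ_[p.1]) where
  carrier := {x | ∀ᶠ p : Nat.Primes in Filter.cofinite, ‖x p‖ ≤ 1}
  zero_mem' := by
    show ∀ᶠ p : Nat.Primes in Filter.cofinite, ‖(0 : Π p : Nat.Primes, ℚ_[p.1]) p‖ ≤ 1
    exact Filter.Eventually.of_forall fun p => by simp
  one_mem' := by
    show ∀ᶠ p : Nat.Primes in Filter.cofinite, ‖(1 : Π p : Nat.Primes, ℚ_[p.1]) p‖ ≤ 1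
    exact Filter.Eventually.of_forall fun p => by simp
  add_mem' := by
    intro a b ha hb
    show ∀ᶠ p : Nat.Primes in Filter.cofinite, ‖(a + b) p‖ ≤ 1
    filter_upwards [ha, hb] with p hpa hpb
    exact le_trans (Padic.nonarchimedean _ _) (max_le hpa hpb)
  neg_mem' := by
    intro a ha
    show ∀ᶠ p : Nat.Primes in Filter.cofinite, ‖(-a) p‖ ≤ 1
    filter_upwards [ha] with p hp
    simpa using hp
  mul_mem' := by
    intro a b ha hb
    show ∀ᶠ p : Nat.Primes in Filter.cofinite, ‖(a * b) p‖ ≤ 1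
    filter_upwards [ha, hb] with p hpa hpb
    have h : ‖(a * b) p‖ = ‖a p‖ * ‖b p‖ := norm_mul _ _
    rw [h]
    nlinarith [norm_nonneg (a p), norm_nonneg (b p)]

/-- The finite adele ring `𝔸_f` as a type. -/
abbrev FA : Type := ↥adeleSubring

/-- `‖x‖₁ = sup_p |x_p|_p`. -/
def norm1 (x : FA) : ℝ := ⨆ p : Nat.Primes, ‖x.1 p‖

/-- `‖x‖₀ = sup_p |x_p|_p / p`. -/
def norm0 (x : FA) : ℝ := ⨆ p : Nat.Primes, ‖x.1 p‖ / p

/-- The adelic norm `‖x‖`. -/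
def anorm (x : FA) : ℝ := if ∀ p, ‖x.1 p‖ ≤ 1 then norm0 x else norm1 x

/-- The restricted product topology on `𝔸_f`. -/
def restrictedTop : TopologicalSpace FA :=
  TopologicalSpace.generateFrom
    { B | ∃ (S : Finset Nat.Primes) (U : Π p : Nat.Primes, Set ℚ_[p.1]),
        (∀ p, IsOpen (U p)) ∧
        B = {x : FA | (∀ p ∈ S, x.1 p ∈ U p) ∧ ∀ p ∉ S, ‖x.1 p‖ ≤ 1} }

end


noncomputable section

/-- The modified integer part `[[t]]`: `⌊t⌋` if `t ≥ 0` and `⌊t⌋ + 1` if `t < 0`. -/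
def bb (t : ℝ) : ℤ := if 0 ≤ t then ⌊t⌋ else ⌊t⌋ + 1

/-- `Φ(x) = ∏_p p^{[[log_p x]]}`, the product running over all primes
(all but finitely many factors equal `1`). -/
def Phi (x : ℝ) : ℝ := ∏ᶠ p : Nat.Primes, (p : ℝ) ^ bb (Real.logb p x)

/-- The set `P` of nonzero integer powers of primes. -/
def Pset : Set ℝ := {r | ∃ (p : ℕ) (j : ℤ), p.Prime ∧ j ≠ 0 ∧ r = (p : ℝ) ^ j}

/-- `n₊`: the next element of `P` after `n`. -/
def nplus (n : ℝ) : ℝ := sInf {m | m ∈ Pset ∧ n < m}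

/-- `n₋`: the previous element of `P` before `n`. -/
def nminus (n : ℝ) : ℝ := sSup {m | m ∈ Pset ∧ m < n}

end


open Real

/-!
The `p`-adic absolute value takes values in `p ^ ℤ ∪ {0}`, so `‖z‖ ≤ r` iff
`‖z‖ ≤ p ^ ⌊log_p r⌋`. For `ε ≥ 1` the condition `‖y‖ ≤ ε` reads `|y_p|_p ≤ ε` for all `p`;
for `ε < 1` it forces `y` to be integral and reads `|y_p|_p ≤ p ε`. In both cases
`⌊log_p⌋` of the threshold is `[[log_p ε]]`, which identifies the ball with the product set.
That exponent vanishes for all large `p`, so the ball is a product of closed `p`-adic balls,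
almost all of them `ℤ_p`: it is compact in the product topology, and on such a set the
product topology is finer than the restricted product topology.
-/

lemma Padic.norm_le_iff_le_zpow_log {p : ℕ} [Fact p.Prime] (z : ℚ_[p]) {r : ℝ} (hr : 0 < r) :
    ‖z‖ ≤ r ↔ ‖z‖ ≤ (p : ℝ) ^ Int.log p r := by
  have hp : 1 < p := (Fact.out : p.Prime).one_lt
  refine ⟨fun h => ?_, fun h => h.trans (Int.zpow_log_le_self hp hr)⟩
  exact (Padic.norm_le_pow_iff_norm_lt_pow_add_one z _).2
    (h.trans_lt (Int.lt_zpow_succ_log_self hp r))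

lemma bb_of_nonneg {t : ℝ} (ht : 0 ≤ t) : bb t = ⌊t⌋ := if_pos ht

lemma bb_of_neg {t : ℝ} (ht : t < 0) : bb t = ⌊t + 1⌋ := by
  rw [bb, if_neg ht.not_ge, Int.floor_add_one]

lemma bb_eq_zero_of_abs_lt_one {t : ℝ} (ht : |t| < 1) : bb t = 0 := by
  obtain ⟨h₁, h₂⟩ := abs_lt.1 ht
  rcases le_or_gt 0 t with h | h
  · rw [bb_of_nonneg h, Int.floor_eq_zero_iff]
    exact ⟨h, h₂⟩
  · rw [bb_of_neg h, Int.floor_eq_zero_iff]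
    constructor <;> linarith

lemma bb_logb_of_one_le {b : ℕ} (hb : 1 < b) {ε : ℝ} (hε : 1 ≤ ε) :
    bb (logb b ε) = Int.log b ε := by
  rw [bb_of_nonneg (logb_nonneg (mod_cast hb) hε), floor_logb_natCast (by linarith)]

lemma bb_logb_of_lt_one {b : ℕ} (hb : 1 < b) {ε : ℝ} (hε : 0 < ε) (hε₁ : ε < 1) :
    bb (logb b ε) = Int.log b (b * ε) := by
  have hb' : (1 : ℝ) < b := mod_cast hb
  rw [bb_of_neg (logb_neg hb' hε hε₁), ← floor_logb_natCast (by positivity),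
    logb_mul (by positivity) hε.ne', logb_self_eq_one hb', add_comm]

lemma Padic.norm_le_zpow_bb_logb_iff_of_one_le {p : ℕ} [Fact p.Prime] (z : ℚ_[p]) {ε : ℝ}
    (hε : 1 ≤ ε) : ‖z‖ ≤ (p : ℝ) ^ bb (logb p ε) ↔ ‖z‖ ≤ ε := by
  rw [bb_logb_of_one_le (Fact.out : p.Prime).one_lt hε,
    ← Padic.norm_le_iff_le_zpow_log z (by linarith)]

lemma Padic.norm_le_zpow_bb_logb_iff_of_lt_one {p : ℕ} [Fact p.Prime] (z : ℚ_[p]) {ε : ℝ}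
    (hε : 0 < ε) (hε₁ : ε < 1) : ‖z‖ ≤ (p : ℝ) ^ bb (logb p ε) ↔ ‖z‖ ≤ p * ε := by
  have hp := (Fact.out : p.Prime)
  rw [bb_logb_of_lt_one hp.one_lt hε hε₁,
    ← Padic.norm_le_iff_le_zpow_log z (mul_pos (mod_cast hp.pos) hε)]

lemma Nat.Primes.one_le_cast (p : Nat.Primes) : (1 : ℝ) ≤ p := mod_cast p.2.one_lt.le

lemma bddAbove_range_norm (y : FA) : BddAbove (Set.range fun p => ‖y.1 p‖) :=
  (isBoundedUnder_of_eventually_le (show ∀ᶠ p in cofinite, ‖y.1 p‖ ≤ 1 from y.2)).bddAbove_range_of_cofinite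

lemma anorm_le_iff_of_one_le (y : FA) {ε : ℝ} (hε : 1 ≤ ε) :
    anorm y ≤ ε ↔ ∀ p, ‖y.1 p‖ ≤ ε := by
  unfold anorm
  split_ifs with hint
  · refine iff_of_true (ciSup_le fun p => ?_) fun p => (hint p).trans hε
    exact (div_le_self (norm_nonneg _) p.one_le_cast).trans ((hint p).trans hε)
  · exact ciSup_le_iff (bddAbove_range_norm y)

lemma anorm_le_iff_of_lt_one (y : FA) {ε : ℝ} (hε : ε < 1) :
    anorm y ≤ ε ↔ ∀ p : Nat.Primes, ‖y.1 p‖ ≤ p * ε := by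
  unfold anorm
  split_ifs with hint
  · have hbdd := (bddAbove_range_norm y).range_mono _
      fun p => div_le_self (norm_nonneg (y.1 p)) p.one_le_cast
    rw [norm0, ciSup_le_iff hbdd]
    refine forall_congr' fun p => ?_
    rw [div_le_iff₀ (by linarith [p.one_le_cast]), mul_comm]
  -- Both sides fail at a prime `q` with `|y_q|_q > 1`, since then `|y_q|_q ≥ q`.
  · obtain ⟨q, hq⟩ := not_forall.1 hint
    rw [not_le] at hq
    refine iff_of_false (fun h => ?_) fun h => ?_
    · linarith [(le_ciSup (bddAbove_range_norm y) q).trans h]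
    · have hlt : ‖y.1 q‖ < (q : ℝ) ^ ((0 : ℤ) + 1) := by
        rw [zero_add, zpow_one]
        exact (h q).trans_lt (mul_lt_of_lt_one_right (by linarith [q.one_le_cast]) hε)
      have := (Padic.norm_le_pow_iff_norm_lt_pow_add_one (y.1 q) 0).2 hlt
      rw [zpow_zero] at this
      linarith

lemma anorm_le_iff (y : FA) {ε : ℝ} (hε : 0 < ε) :
    anorm y ≤ ε ↔ ∀ p : Nat.Primes, ‖y.1 p‖ ≤ (p : ℝ) ^ bb (logb p ε) := by
  rcases le_or_gt 1 ε with h | h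
  · simp only [Padic.norm_le_zpow_bb_logb_iff_of_one_le _ h]
    exact anorm_le_iff_of_one_le y h
  · simp only [Padic.norm_le_zpow_bb_logb_iff_of_lt_one _ hε h]
    exact anorm_le_iff_of_lt_one y h

lemma eventually_bb_logb_eq_zero (ε : ℝ) :
    ∀ᶠ p : Nat.Primes in cofinite, bb (logb p ε) = 0 := by
  have hcast : Tendsto (fun p : Nat.Primes => (p : ℝ)) cofinite atTop :=
    tendsto_natCast_atTop_atTop.comp
      (Nat.cofinite_eq_atTop ▸ Subtype.val_injective.tendsto_cofinite)
  filter_upwards [hcast.eventually_gt_atTop (exp |log ε|)] with p hp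
  have hlog : 0 < log p := log_pos (mod_cast p.2.one_lt)
  apply bb_eq_zero_of_abs_lt_one
  rw [logb, abs_div, abs_of_pos hlog, div_lt_one hlog]
  exact (lt_log_iff_exp_lt (by linarith [p.one_le_cast])).2 hp

lemma continuous_restrictedTop {X : Type*} [TopologicalSpace X] {f : X → FA}
    (hf : Continuous fun x => (f x).1) (F : Finset Nat.Primes)
    (hF : ∀ x, ∀ p ∉ F, ‖(f x).1 p‖ ≤ 1) : @Continuous X FA _ restrictedTop f := by
  refine continuous_generateFrom_iff.2 ?_
  rintro _ ⟨S, U, hU, rfl⟩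
  -- `ℤ_p` is open in `ℚ_p`, and only the primes of `F` can violate integrality.
  let V : Π p : Nat.Primes, Set ℚ_[p.1] := fun p => if p ∈ S then U p else Metric.closedBall 0 1
  have hV : ∀ p, IsOpen (V p) := fun p => by
    by_cases hp : p ∈ S
    · simpa [V, hp] using hU p
    · simpa [V, hp] using IsUltrametricDist.isOpen_closedBall (0 : ℚ_[p.1]) one_ne_zero
  have hopen : IsOpen (⋂ p ∈ S ∪ F, (fun y : Π p : Nat.Primes, ℚ_[p.1] => y p) ⁻¹' V p) :=
    isOpen_biInter_finset fun p _ => (hV p).preimage (continuous_apply p)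
  convert hopen.preimage hf using 1
  ext x
  simp only [Set.mem_preimage, Set.mem_ofPred_eq, Set.mem_iInter, Finset.mem_union]
  constructor
  · rintro ⟨hS, hnS⟩ p -
    by_cases hp : p ∈ S
    · simpa [V, hp] using hS p hp
    · simpa [V, hp] using hnS p hp
  · intro h
    refine ⟨fun p hp => by simpa [V, hp] using h p (Or.inl hp), fun p hp => ?_⟩
    by_cases hpF : p ∈ F
    · simpa [V, hp] using h p (Or.inr hpF)
    · exact hF x p hpF

lemma isCompact_restrictedTop {K : Set (Π p : Nat.Primes, ℚ_[p.1])} (hK : IsCompact K)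
    (F : Finset Nat.Primes) (hF : ∀ y ∈ K, ∀ p ∉ F, ‖y p‖ ≤ 1) :
    @IsCompact FA restrictedTop {x : FA | x.1 ∈ K} := by
  have hmem : ∀ y ∈ K, y ∈ adeleSubring := fun y hy =>
    F.eventually_cofinite_notMem.mono (hF y hy)
  have := isCompact_iff_compactSpace.1 hK
  let f : K → FA := fun y => ⟨y, hmem y y.2⟩
  have hrange : Set.range f = {x : FA | x.1 ∈ K} :=
    Set.ext fun x => ⟨by rintro ⟨y, rfl⟩; exact y.2, fun hx => ⟨⟨x.1, hx⟩, rfl⟩⟩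
  rw [← hrange]
  exact @isCompact_range _ _ _ restrictedTop _ f
    (continuous_restrictedTop continuous_subtype_val F fun y => hF y y.2)

/-- The closed ball of radius `ε` around `x⁰` in `𝔸_f` equals the product set
`∏_p (x⁰_p + p^{-α_p(ε)} ℤ_p)` with `α_p(ε) = [[log_p ε]]`; in particular it is compact
in the restricted product topology. -/
theorem stmt_8 (x0 : FA) (ε : ℝ) (hε : 0 < ε) :
    {x : FA | anorm (x - x0) ≤ ε}
        = {x : FA | ∀ p : Nat.Primes, ‖x.1 p - x0.1 p‖ ≤ (p : ℝ) ^ bb (Real.logb p ε)} ∧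
      @IsCompact FA restrictedTop {x : FA | anorm (x - x0) ≤ ε} := by
  have hball : {x : FA | anorm (x - x0) ≤ ε}
      = {x : FA | ∀ p : Nat.Primes, ‖x.1 p - x0.1 p‖ ≤ (p : ℝ) ^ bb (logb p ε)} :=
    Set.ext fun x => anorm_le_iff (x - x0) hε
  refine ⟨hball, hball ▸ ?_⟩
  obtain ⟨F, hF⟩ : ∃ F : Finset Nat.Primes, ∀ p ∉ F, bb (logb p ε) = 0 ∧ ‖x0.1 p‖ ≤ 1 := by
    have hfin := eventually_cofinite.1 ((eventually_bb_logb_eq_zero ε).and x0.2)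
    exact ⟨hfin.toFinset, fun p hp => not_not.1 (mt hfin.mem_toFinset.2 hp)⟩
  convert isCompact_restrictedTop (isCompact_univ_pi fun p =>
    isCompact_closedBall (x0.1 p) ((p : ℝ) ^ bb (logb p ε))) F ?_ using 1
  · ext x
    simp [dist_eq_norm]
  · intro y hy p hp
    obtain ⟨hα, hx0⟩ := hF p hp
    have hdist : ‖y p - x0.1 p‖ ≤ 1 := by
      simpa [hα, dist_eq_norm] using hy p trivial
    calc ‖y p‖ = ‖(y p - x0.1 p) + x0.1 p‖ := by rw [sub_add_cancel]
      _ ≤ max ‖y p - x0.1 p‖ ‖x0.1 p‖ := Padic.nonarchimedean _ _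
      _ ≤ 1 := max_le hdist hx0
end

section
/- Let μ be the Haar measure on (𝔸_f, +) normalized so that μ(∏_p ℤ_p) = 1. Then for every r in the set P of nonzero integer prime powers, μ(B_r(0)) = Φ(r) and μ(S_r(0)) = Φ(r) − Φ(r₋), where B_r(0) = {x : ‖x‖ ≤ r}, S_r(0) = {x : ‖x‖ = r}, Φ(x) = ∏_p p^{[[log_p x]]}, and r₋ is the previous element of P. -/
open Filter MeasureTheory
open scoped Classical

noncomputable section

open Filter MeasureTheory

instance : TopologicalSpace FA := restrictedTop
instance : MeasurableSpace FA := borel FA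
instance : BorelSpace FA := ⟨rfl⟩

/-- The unit ball `∏_p ℤ_p` inside `𝔸_f`. -/
def unitBall : Set FA := {x : FA | ∀ p : Nat.Primes, ‖x.1 p‖ ≤ 1}

/-- The fractional part `{x}_p` of a `p`-adic number (a rational in `[0,1)`). -/
def padicFrac {p : ℕ} [Fact p.Prime] (x : ℚ_[p]) : ℚ :=
  if h : ‖(p : ℚ_[p]) ^ (-x.valuation).toNat * x‖ ≤ 1 then
    ((PadicInt.appr (⟨_, h⟩ : ℤ_[p]) (-x.valuation).toNat : ℕ) : ℚ) / (p : ℚ) ^ (-x.valuation).toNat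
  else 0

/-- The standard additive character of `𝔸_f`: `χ(x) = ∏_p exp(−2πi {x_p}_p)`. -/
def achar (x : FA) : ℂ :=
  ∏ᶠ p : Nat.Primes,
    Complex.exp (-(2 * Real.pi * (padicFrac (x.1 p) : ℝ) : ℝ) * Complex.I)

end


open MeasureTheory

/-!
The ball `{‖x‖ ≤ r}` of radius `r > 0` is the box `∏_p p^{e_p} ℤ_p` with `e_p = [[log_p r]]`,
and `e_p = 0` for `p > max(r, 1/r)`. Raising one exponent `e_q` by one enlarges a box into the
disjoint union of `q` translates of it (by the `q`-adic digits `t q^{-(e_q+1)}`, `t < q`), so by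
translation invariance and `μ(∏_p ℤ_p) = 1` the box has measure `∏_p p^{e_p} = Φ(r)`.
Nonzero adelic norms lie in `P`, and `P` is discrete in `(0, ∞)`, so the sphere of radius
`r ∈ P` is the ball of radius `r` minus the ball of radius `r₋`.
-/

open Real Metric
open scoped ENNReal

namespace Padic

variable {p : ℕ} [hp : Fact p.Prime]

theorem norm_le_iff_le_zpow_floor_logb (x : ℚ_[p]) {r : ℝ} (hr : 0 < r) :
    ‖x‖ ≤ r ↔ ‖x‖ ≤ (p : ℝ) ^ ⌊logb p r⌋ := by
  have hp1 : (1 : ℝ) < p := mod_cast hp.out.one_lt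
  have hrpow : (p : ℝ) ^ logb p r = r := rpow_logb (by positivity) hp1.ne' hr
  refine ⟨fun h => ?_, fun h => h.trans ?_⟩
  · rcases eq_or_ne x 0 with rfl | hx
    · simpa using zpow_nonneg (by positivity) _
    rw [norm_eq_zpow_neg_valuation hx] at h ⊢
    rw [zpow_le_zpow_iff_right₀ hp1, Int.le_floor, ← rpow_le_rpow_left_iff hp1, hrpow,
      rpow_intCast]
    exact h
  · calc (p : ℝ) ^ ⌊logb p r⌋ = (p : ℝ) ^ (⌊logb p r⌋ : ℝ) := (rpow_intCast _ _).symm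
      _ ≤ (p : ℝ) ^ logb p r := rpow_le_rpow_of_exponent_le hp1.le (Int.floor_le _)
      _ = r := hrpow

theorem norm_mem_Pset {x : ℚ_[p]} (hx : x ≠ 0) (h1 : ‖x‖ ≠ 1) : ‖x‖ ∈ Pset :=
  ⟨p, -x.valuation, hp.out, fun h => h1 (by simp [norm_eq_zpow_neg_valuation hx, h]),
    norm_eq_zpow_neg_valuation hx⟩

theorem norm_natCast_sub_natCast {t t' : ℕ} (ht : t < p) (ht' : t' < p) (hne : t ≠ t') :
    ‖(t : ℚ_[p]) - t'‖ = 1 := by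
  have hcast : (t : ℚ_[p]) - t' = (((t : ℤ) - t' : ℤ) : ℚ_[p]) := by push_cast; ring
  rw [hcast]
  refine le_antisymm (norm_int_le_one _) (not_lt.mp fun h => hne ?_)
  have habs : |(t : ℤ) - t'| < p := by rw [abs_lt]; omega
  have := Int.eq_zero_of_abs_lt_dvd (norm_intCast_lt_one_iff.mp h) habs
  omega

theorem norm_natCast_mul_zpow_le {m : ℤ} (t : ℕ) :
    ‖(t : ℚ_[p]) * (p : ℚ_[p]) ^ (-(m + 1))‖ ≤ (p : ℝ) ^ (m + 1) := by
  rw [norm_mul, norm_p_zpow, neg_neg]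
  exact mul_le_of_le_one_left (zpow_pos (mod_cast hp.out.pos) _).le
    (IsUltrametricDist.norm_natCast_le_one ℚ_[p] t)

theorem norm_le_zpow_add_one_iff_exists_digit {x : ℚ_[p]} {m : ℤ} :
    ‖x‖ ≤ (p : ℝ) ^ (m + 1) ↔
      ∃ t : ℕ, t < p ∧ ‖x - t * (p : ℚ_[p]) ^ (-(m + 1))‖ ≤ (p : ℝ) ^ m := by
  have hp0 : (p : ℚ_[p]) ≠ 0 := Nat.cast_ne_zero.mpr hp.out.ne_zero
  have hpow : (0 : ℝ) < (p : ℝ) ^ (m + 1) := zpow_pos (mod_cast hp.out.pos) _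
  constructor
  · intro hx
    set y := x * (p : ℚ_[p]) ^ (m + 1)
    have hy : ‖y‖ ≤ 1 := by
      rw [norm_mul, norm_p_zpow, zpow_neg, ← div_eq_mul_inv]
      exact div_le_one_of_le₀ hx hpow.le
    obtain ⟨t, htp, ht⟩ := PadicInt.exists_mem_range ⟨y, hy⟩
    have ht : ‖y - t‖ < 1 := PadicInt.mem_nonunits.mp ht
    refine ⟨t, htp, ?_⟩
    have hxy : x - t * (p : ℚ_[p]) ^ (-(m + 1)) = (y - t) * (p : ℚ_[p]) ^ (-(m + 1)) := by
      rw [sub_mul, mul_assoc, ← zpow_add₀ hp0, add_neg_cancel, zpow_zero, mul_one]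
    have hlt : ‖(y - t) * (p : ℚ_[p]) ^ (-(m + 1))‖ < (p : ℝ) ^ (m + 1) := by
      rw [norm_mul, norm_p_zpow, neg_neg]
      simpa using mul_lt_mul_of_pos_right ht hpow
    rw [hxy]
    simpa using (norm_lt_pow_iff_norm_le_pow_sub_one _ _).mp hlt
  · rintro ⟨t, -, ht⟩
    have hm : (p : ℝ) ^ m ≤ (p : ℝ) ^ (m + 1) :=
      zpow_le_zpow_right₀ (mod_cast hp.out.one_le) (by omega)
    calc ‖x‖ = ‖(x - t * (p : ℚ_[p]) ^ (-(m + 1))) + t * (p : ℚ_[p]) ^ (-(m + 1))‖ := by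
          rw [sub_add_cancel]
      _ ≤ (p : ℝ) ^ (m + 1) :=
          (nonarchimedean _ _).trans (max_le (ht.trans hm) (norm_natCast_mul_zpow_le t))

theorem eq_of_norm_sub_digit_le {x : ℚ_[p]} {m : ℤ} {t t' : ℕ} (ht : t < p) (ht' : t' < p)
    (hx : ‖x - t * (p : ℚ_[p]) ^ (-(m + 1))‖ ≤ (p : ℝ) ^ m)
    (hx' : ‖x - t' * (p : ℚ_[p]) ^ (-(m + 1))‖ ≤ (p : ℝ) ^ m) : t = t' := by
  by_contra hne
  have hle : ‖((t : ℚ_[p]) - t') * (p : ℚ_[p]) ^ (-(m + 1))‖ ≤ (p : ℝ) ^ m := by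
    have hsplit : ((t : ℚ_[p]) - t') * (p : ℚ_[p]) ^ (-(m + 1)) =
        (x - t' * (p : ℚ_[p]) ^ (-(m + 1))) + -(x - t * (p : ℚ_[p]) ^ (-(m + 1))) := by ring
    rw [hsplit]
    exact (nonarchimedean _ _).trans (by rw [norm_neg]; exact max_le hx' hx)
  rw [norm_mul, norm_natCast_sub_natCast ht ht' hne, one_mul, norm_p_zpow, neg_neg] at hle
  exact absurd hle (not_le.mpr (zpow_lt_zpow_right₀ (mod_cast hp.out.one_lt) (by omega)))

end Padic

theorem Nat.Primes.one_lt_cast (p : Nat.Primes) : (1 : ℝ) < p := mod_cast p.2.one_lt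

theorem Nat.Primes.cast_pos (p : Nat.Primes) : (0 : ℝ) < p := mod_cast p.2.pos

theorem ENNReal.eq_ofReal_zpow_mul_of_succ {g : ℤ → ℝ≥0∞} {a : ℝ} (ha : 0 < a)
    (h : ∀ k, g (k + 1) = ENNReal.ofReal a * g k) (k : ℤ) :
    g k = ENNReal.ofReal (a ^ k) * g 0 := by
  have hmul : ∀ k : ℤ, ENNReal.ofReal (a ^ (k + 1)) = ENNReal.ofReal a * ENNReal.ofReal (a ^ k) :=
    fun k => by rw [← ENNReal.ofReal_mul ha.le, zpow_add_one₀ ha.ne', mul_comm]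
  induction k using Int.induction_on with
  | zero => simp
  | succ k ih => rw [h, ih, hmul, mul_assoc]
  | pred k ih =>
    have hk := h (-k - 1)
    have hpow := hmul (-k - 1)
    rw [sub_add_cancel] at hk hpow
    rw [ih, hpow, mul_assoc] at hk
    exact ((ENNReal.mul_right_inj (by simpa using ha) ENNReal.ofReal_ne_top).mp hk).symm

theorem exists_le_and_ciSup_eq {ι α : Type*} [ConditionallyCompleteLinearOrder α] {f : ι → α}
    {i₀ : ι} (hfin : {i | f i₀ ≤ f i}.Finite) : ∃ i, f i₀ ≤ f i ∧ ⨆ j, f j = f i := by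
  have : Nonempty ι := ⟨i₀⟩
  obtain ⟨i, hi, hmax⟩ := Set.exists_max_image _ f hfin ⟨i₀, le_refl (f i₀)⟩
  have hle : ∀ j, f j ≤ f i := fun j =>
    (le_total (f i₀) (f j)).elim (hmax j) fun hj => hj.trans hi
  exact ⟨i, hi, ciSup_eq_of_forall_le_of_forall_lt_exists_gt hle fun _ hw => ⟨i, hw⟩⟩

theorem finite_setOf_primes_cast_le (C : ℝ) : {p : Nat.Primes | (p : ℝ) ≤ C}.Finite :=
  ((Set.finite_Iic ⌊C⌋₊).preimage Subtype.val_injective.injOn).subset fun _ hp => Nat.le_floor hp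

theorem Pset_pos {m : ℝ} (hm : m ∈ Pset) : 0 < m := by
  obtain ⟨p, j, hp, -, rfl⟩ := hm
  exact zpow_pos (mod_cast hp.pos) j

theorem finite_Pset_inter_Ico {c : ℝ} (hc : 0 < c) (R : ℝ) : (Pset ∩ Set.Ico c R).Finite := by
  set N := ⌊max R c⁻¹⌋₊
  refine ((Finset.range (N + 1) ×ˢ Finset.Icc (-(N : ℤ)) N).finite_toSet.image
    fun z : ℕ × ℤ => (z.1 : ℝ) ^ z.2).subset ?_
  rintro _ ⟨⟨p, j, hp, hj, rfl⟩, hcm, hmR⟩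
  have hpow : ((p ^ j.natAbs : ℕ) : ℝ) ≤ max R c⁻¹ := by
    push_cast
    rcases Int.natAbs_eq j with h | h
    · rw [h, zpow_natCast] at hmR
      exact le_max_of_le_left hmR.le
    · rw [h, zpow_neg, zpow_natCast] at hcm
      exact le_max_of_le_right ((le_inv_comm₀ hc (pow_pos (mod_cast hp.pos) _)).mp hcm)
  have hN : p ^ j.natAbs ≤ N := Nat.le_floor hpow
  have hp_le := Nat.le_self_pow (Int.natAbs_ne_zero.mpr hj) p
  have hj_lt : j.natAbs < p ^ j.natAbs := Nat.lt_pow_self hp.one_lt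
  refine ⟨(p, j), ?_, rfl⟩
  simp only [Finset.coe_product, Set.mem_prod, Finset.mem_coe, Finset.mem_range, Finset.mem_Icc]
  omega

theorem exists_Pset_lt {r : ℝ} (hr : 0 < r) : ∃ m ∈ Pset, m < r := by
  obtain ⟨q, hq, hqp⟩ := Nat.exists_infinite_primes (⌊r⁻¹⌋₊ + 1)
  refine ⟨(q : ℝ) ^ (-1 : ℤ), ⟨q, -1, hqp, by norm_num, rfl⟩, ?_⟩
  rw [zpow_neg_one, inv_lt_comm₀ (mod_cast hqp.pos) hr]
  exact (Nat.lt_floor_add_one r⁻¹).trans_le (mod_cast hq)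

theorem isGreatest_nminus {r : ℝ} (hr : 0 < r) : IsGreatest {m | m ∈ Pset ∧ m < r} (nminus r) := by
  obtain ⟨m₀, hm₀, hm₀r⟩ := exists_Pset_lt hr
  obtain ⟨m, ⟨hm, hm₀m, hmr⟩, hmax⟩ := Set.exists_max_image _ id
    (finite_Pset_inter_Ico (Pset_pos hm₀) r) ⟨m₀, hm₀, le_rfl, hm₀r⟩
  have hgreatest : IsGreatest {m | m ∈ Pset ∧ m < r} m :=
    ⟨⟨hm, hmr⟩, fun m' ⟨hm', hm'r⟩ =>
      (le_total m₀ m').elim (fun h => hmax m' ⟨hm', h, hm'r⟩) fun h => h.trans hm₀m⟩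
  rwa [nminus, hgreatest.csSup_eq]

noncomputable def ballExponent (r : ℝ) (p : Nat.Primes) : ℤ := bb (logb p r)

theorem ballExponent_eq_zero {r : ℝ} (hr : 0 < r) {p : Nat.Primes} (hp : max r r⁻¹ < p) :
    ballExponent r p = 0 := by
  have hp1 := p.one_lt_cast
  unfold ballExponent bb
  rcases le_or_gt 1 r with h1 | h1
  · have hlt : logb p r < 1 := by
      rw [logb_lt_iff_lt_rpow hp1 hr, rpow_one]
      exact (le_max_left _ _).trans_lt hp
    rw [if_pos (logb_nonneg hp1 h1), Int.floor_eq_zero_iff]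
    exact ⟨logb_nonneg hp1 h1, hlt⟩
  · have hgt : -1 < logb p r := by
      rw [lt_logb_iff_rpow_lt hp1 hr, rpow_neg_one]
      exact (inv_lt_comm₀ hr (zero_lt_one.trans hp1)).mp ((le_max_right _ _).trans_lt hp)
    have hfloor : ⌊logb p r⌋ = -1 := by
      rw [Int.floor_eq_iff]
      constructor <;> push_cast <;> linarith [logb_neg hp1 hr h1]
    rw [if_neg (not_le.mpr (logb_neg hp1 hr h1)), hfloor, neg_add_cancel]

theorem exists_finset_ballExponent_eq_zero {r : ℝ} (hr : 0 < r) :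
    ∃ S : Finset Nat.Primes, ∀ p ∉ S, ballExponent r p = 0 :=
  ⟨(Finset.range (⌊max r r⁻¹⌋₊ + 1)).subtype Nat.Prime, fun _ hp =>
    ballExponent_eq_zero hr <| Nat.lt_of_floor_lt <| not_le.mp fun h =>
      hp (Finset.mem_subtype.mpr (Finset.mem_range.mpr (Nat.lt_succ_of_le h)))⟩

theorem Phi_eq_prod {r : ℝ} {S : Finset Nat.Primes} (hS : ∀ p ∉ S, ballExponent r p = 0) :
    Phi r = ∏ p ∈ S, (p : ℝ) ^ ballExponent r p :=
  finprod_eq_prod_of_mulSupport_subset _ fun p hp => by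
    by_contra hpS
    exact hp (by change (p : ℝ) ^ ballExponent r p = 1; rw [hS p hpS, zpow_zero])

theorem Phi_nonneg (x : ℝ) : 0 ≤ Phi x :=
  finprod_nonneg fun _ => zpow_nonneg (Nat.cast_nonneg _) _

namespace FA

theorem isOpen_setOf_forall_mem (W : Π p : Nat.Primes, Set ℚ_[p.1]) (hW : ∀ p, IsOpen (W p))
    (hfin : ∀ᶠ p in cofinite, W p = closedBall 0 1) :
    IsOpen {x : FA | ∀ p, x.1 p ∈ W p} := by
  set S := (eventually_cofinite.mp hfin).toFinset
  have hS : ∀ p ∉ S, W p = closedBall 0 1 := fun p hp => by simpa [S] using hp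
  have : {x : FA | ∀ p, x.1 p ∈ W p} =
      {x : FA | (∀ p ∈ S, x.1 p ∈ W p) ∧ ∀ p ∉ S, ‖x.1 p‖ ≤ 1} := by
    ext x
    refine ⟨fun hx => ⟨fun p _ => hx p, fun p hp => ?_⟩, fun ⟨hxS, hx⟩ p => ?_⟩
    · simpa [hS p hp] using hx p
    · by_cases hp : p ∈ S
      · exact hxS p hp
      · simpa [hS p hp] using hx p hp
  rw [this]
  exact TopologicalSpace.isOpen_generateFrom_of_mem ⟨S, W, hW, rfl⟩

theorem continuous_const_add (c : FA) : Continuous (c + ·) := by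
  refine continuous_generateFrom_iff.mpr ?_
  rintro _ ⟨S, U, hU, rfl⟩
  classical
  set W : Π p : Nat.Primes, Set ℚ_[p.1] := fun p => if p ∈ S then U p else closedBall 0 1
  have hpre : (c + ·) ⁻¹' {x : FA | (∀ p ∈ S, x.1 p ∈ U p) ∧ ∀ p ∉ S, ‖x.1 p‖ ≤ 1} =
      {x : FA | ∀ p, x.1 p ∈ (c.1 p + ·) ⁻¹' W p} := by
    ext x
    simp only [Set.mem_preimage, Set.mem_ofPred_eq, W]
    refine ⟨fun ⟨hS, hc⟩ p => ?_, fun h => ⟨fun p hp => ?_, fun p hp => ?_⟩⟩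
    · by_cases hp : p ∈ S
      · simpa [hp] using hS p hp
      · simpa [hp] using hc p hp
    · simpa [hp] using h p
    · simpa [hp] using h p
  rw [hpre]
  refine isOpen_setOf_forall_mem _
    (fun p => (?_ : IsOpen (W p)).preimage (_root_.continuous_const_add _)) ?_
  · by_cases hp : p ∈ S
    · simpa [W, hp] using hU p
    · simpa [W, hp] using IsUltrametricDist.isOpen_closedBall (0 : ℚ_[p.1]) one_ne_zero
  · filter_upwards [S.finite_toSet.compl_mem_cofinite, eventually_cofinite.mpr c.2]
      with p hpS hc
    have hc : -c.1 p ∈ closedBall (0 : ℚ_[p.1]) 1 := by simpa using hc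
    ext y
    simp [W, show p ∉ S from hpS, ← IsUltrametricDist.closedBall_eq_of_mem hc, dist_eq_norm]

theorem measurable_const_add (c : FA) : Measurable (c + ·) :=
  (continuous_const_add c).measurable

noncomputable def single (q : Nat.Primes) (v : ℚ_[q.1]) : FA :=
  ⟨Pi.single q v, (eventually_cofinite_ne q).mono fun p hp => by simp [Pi.single_eq_of_ne hp]⟩

@[simp]
theorem single_apply_self (q : Nat.Primes) (v : ℚ_[q.1]) : (single q v).1 q = v :=
  Pi.single_eq_same _ _

@[simp]
theorem single_apply_of_ne {q p : Nat.Primes} (v : ℚ_[q.1]) (hp : p ≠ q) : (single q v).1 p = 0 :=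
  Pi.single_eq_of_ne hp _

theorem measure_preimage_const_add (μ : Measure FA) [μ.IsAddLeftInvariant] (c : FA) {s : Set FA}
    (hs : MeasurableSet s) : μ ((c + ·) ⁻¹' s) = μ s := by
  rw [← Measure.map_apply (measurable_const_add c) hs, map_add_left_eq_self]

def box (e : Nat.Primes → ℤ) : Set FA := {x | ∀ p, ‖x.1 p‖ ≤ (p : ℝ) ^ e p}

theorem box_zero : box 0 = unitBall := by
  ext x
  simp [box, unitBall]

theorem isOpen_box {e : Nat.Primes → ℤ} (he : ∀ᶠ p in cofinite, e p = 0) : IsOpen (box e) := by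
  have : box e = {x : FA | ∀ p : Nat.Primes, x.1 p ∈ closedBall 0 ((p : ℝ) ^ e p)} := by
    ext x
    simp [box]
  rw [this]
  refine isOpen_setOf_forall_mem _ (fun p => ?_) (he.mono fun p hp => by rw [hp, zpow_zero])
  exact IsUltrametricDist.isOpen_closedBall _ (zpow_pos (mod_cast p.2.pos) _).ne'

theorem mem_box_update_iff {e : Nat.Primes → ℤ} {q : Nat.Primes} {k : ℤ} {x : FA} :
    x ∈ box (Function.update e q k) ↔ ‖x.1 q‖ ≤ (q : ℝ) ^ k ∧ ∀ p ≠ q, ‖x.1 p‖ ≤ (p : ℝ) ^ e p :=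
  Function.forall_update_iff e fun p k => ‖x.1 p‖ ≤ (p : ℝ) ^ k

theorem mem_preimage_add_single_box_iff {e : Nat.Primes → ℤ} {q : Nat.Primes} {v : ℚ_[q.1]}
    {x : FA} : x ∈ (-single q v + ·) ⁻¹' box e ↔
      ‖x.1 q - v‖ ≤ (q : ℝ) ^ e q ∧ ∀ p ≠ q, ‖x.1 p‖ ≤ (p : ℝ) ^ e p := by
  have hcoord : ∀ p, (-single q v + x).1 p = x.1 p - (single q v).1 p := fun p => by
    simp [neg_add_eq_sub]
  simp only [Set.mem_preimage, box, Set.mem_ofPred_eq, hcoord]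
  refine ⟨fun h => ⟨by simpa using h q, fun p hp => by simpa [hp] using h p⟩, ?_⟩
  rintro ⟨hq, hne⟩ p
  by_cases hp : p = q
  · subst hp
    simpa using hq
  · simpa [hp] using hne p hp

theorem measure_box_update_add_one (μ : Measure FA) [μ.IsAddLeftInvariant] {e : Nat.Primes → ℤ}
    (he : ∀ᶠ p in cofinite, e p = 0) (q : Nat.Primes) :
    μ (box (Function.update e q (e q + 1))) = q * μ (box e) := by
  set translate : ℕ → Set FA :=
    fun t => (-single q (t * (q : ℚ_[q.1]) ^ (-(e q + 1))) + ·) ⁻¹' box e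
  have hmeas : ∀ t, MeasurableSet (translate t) := fun t =>
    (isOpen_box he).measurableSet.preimage (measurable_const_add _)
  have hunion : box (Function.update e q (e q + 1)) = ⋃ t ∈ Finset.range q, translate t := by
    ext x
    simp only [mem_box_update_iff, Padic.norm_le_zpow_add_one_iff_exists_digit, Set.mem_iUnion,
      Finset.mem_range, translate, mem_preimage_add_single_box_iff, exists_prop]
    tauto
  have hdisj : (Finset.range q : Set ℕ).PairwiseDisjoint translate := by
    intro t ht t' ht' hne
    refine Set.disjoint_left.mpr fun x hx hx' => hne ?_
    exact Padic.eq_of_norm_sub_digit_le (by simpa using ht) (by simpa using ht')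
      (mem_preimage_add_single_box_iff.mp hx).1 (mem_preimage_add_single_box_iff.mp hx').1
  rw [hunion, measure_biUnion_finset hdisj fun t _ => hmeas t]
  simp [translate, measure_preimage_const_add μ _ (isOpen_box he).measurableSet]

theorem measure_box_update (μ : Measure FA) [μ.IsAddLeftInvariant] {e : Nat.Primes → ℤ}
    (he : ∀ᶠ p in cofinite, e p = 0) (q : Nat.Primes) (k : ℤ) :
    μ (box (Function.update e q k)) =
      ENNReal.ofReal ((q : ℝ) ^ k) * μ (box (Function.update e q 0)) := by
  refine ENNReal.eq_ofReal_zpow_mul_of_succ (g := fun k => μ (box (Function.update e q k)))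
    (mod_cast q.2.pos) (fun k => ?_) k
  have he' : ∀ᶠ p in cofinite, Function.update e q k p = 0 := by
    filter_upwards [he, eventually_cofinite_ne q] with p hp hpq
    simp [hpq, hp]
  simpa using measure_box_update_add_one μ he' q

theorem measure_box (μ : Measure FA) [μ.IsAddLeftInvariant] (hone : μ unitBall = 1)
    (S : Finset Nat.Primes) {e : Nat.Primes → ℤ} (he : ∀ p ∉ S, e p = 0) :
    μ (box e) = ENNReal.ofReal (∏ p ∈ S, (p : ℝ) ^ e p) := by
  induction S using Finset.induction_on generalizing e with
  | empty =>
    obtain rfl : e = 0 := funext fun p => he p (Finset.notMem_empty p)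
    simp [box_zero, hone]
  | insert q S hq ih =>
    set e' := Function.update e q 0
    have he' : ∀ p ∉ S, e' p = 0 := fun p hp => by
      by_cases hpq : p = q
      · simp [e', hpq]
      · simp [e', hpq, he p (by simp [hpq, hp])]
    have hprod : ∏ p ∈ S, (p : ℝ) ^ e' p = ∏ p ∈ S, (p : ℝ) ^ e p :=
      Finset.prod_congr rfl fun p hp => by simp [e', ne_of_mem_of_not_mem hp hq]
    have hcof : ∀ᶠ p in cofinite, e' p = 0 :=
      S.eventually_cofinite_notMem.mono fun p hp => he' p hp
    have := measure_box_update μ hcof q (e q)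
    simp only [e', Function.update_idem, Function.update_eq_self] at this
    rw [this, ih he', hprod, Finset.prod_insert hq,
      ENNReal.ofReal_mul (zpow_pos (mod_cast q.2.pos) _).le]

theorem bddAbove_range_norm (x : FA) : BddAbove (Set.range fun p => ‖x.1 p‖) := by
  refine (((eventually_cofinite.mp x.2).image fun p => ‖x.1 p‖).bddAbove.union
    (bddAbove_Iic (a := 1))).mono ?_
  rintro _ ⟨p, rfl⟩
  by_cases h : ‖x.1 p‖ ≤ 1
  · exact Or.inr h
  · exact Or.inl ⟨p, h, rfl⟩

theorem norm_div_le_norm (x : FA) (p : Nat.Primes) : ‖x.1 p‖ / p ≤ ‖x.1 p‖ :=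
  div_le_self (norm_nonneg _) p.one_lt_cast.le

theorem bddAbove_range_norm_div (x : FA) : BddAbove (Set.range fun p => ‖x.1 p‖ / p) :=
  (bddAbove_range_norm x).range_mono _ (norm_div_le_norm x)

theorem anorm_le_iff_of_one_le {x : FA} {r : ℝ} (hr : 1 ≤ r) :
    anorm x ≤ r ↔ ∀ p, ‖x.1 p‖ ≤ r := by
  unfold anorm
  split_ifs with h
  · exact ⟨fun _ p => (h p).trans hr,
      fun _ => (ciSup_le fun p => (norm_div_le_norm x p).trans (h p)).trans hr⟩
  · exact ciSup_le_iff (bddAbove_range_norm x)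

theorem anorm_le_iff_of_lt_one {x : FA} {r : ℝ} (hr : r < 1) :
    anorm x ≤ r ↔ ∀ p, ‖x.1 p‖ ≤ p * r := by
  unfold anorm
  split_ifs with h
  · rw [norm0, ciSup_le_iff (bddAbove_range_norm_div x)]
    exact forall_congr' fun p => by rw [div_le_iff₀ (p.cast_pos), mul_comm]
  · push Not at h
    obtain ⟨q, hq⟩ := h
    refine ⟨fun hx => absurd ((le_ciSup (bddAbove_range_norm x) q).trans hx) (by linarith),
      fun hx => absurd ?_ hq.not_ge⟩
    have hlt : ‖x.1 q‖ < (q : ℝ) ^ (1 : ℤ) := by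
      rw [zpow_one]
      exact (hx q).trans_lt (mul_lt_of_lt_one_right (q.cast_pos) hr)
    simpa using (Padic.norm_lt_pow_iff_norm_le_pow_sub_one _ _).mp hlt

theorem setOf_anorm_le_eq_box {r : ℝ} (hr : 0 < r) :
    {x : FA | anorm x ≤ r} = box (ballExponent r) := by
  ext x
  simp only [Set.mem_ofPred_eq, box, ballExponent, bb]
  rcases le_or_gt 1 r with h1 | h1
  · rw [anorm_le_iff_of_one_le h1]
    refine forall_congr' fun p => ?_
    rw [Padic.norm_le_iff_le_zpow_floor_logb _ hr, if_pos (logb_nonneg p.one_lt_cast h1)]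
  · rw [anorm_le_iff_of_lt_one h1]
    refine forall_congr' fun p => ?_
    have hp := p.one_lt_cast
    rw [Padic.norm_le_iff_le_zpow_floor_logb _ (mul_pos p.cast_pos hr),
      logb_mul p.cast_pos.ne' hr.ne', logb_self_eq_one hp, add_comm, Int.floor_add_one,
      if_neg (not_le.mpr (logb_neg hp hr h1))]

theorem measure_setOf_anorm_le (μ : Measure FA) [μ.IsAddLeftInvariant] (hone : μ unitBall = 1)
    {r : ℝ} (hr : 0 < r) : μ {x | anorm x ≤ r} = ENNReal.ofReal (Phi r) := by
  obtain ⟨S, hS⟩ := exists_finset_ballExponent_eq_zero hr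
  rw [setOf_anorm_le_eq_box hr, measure_box μ hone S hS, Phi_eq_prod hS]

theorem measurableSet_setOf_anorm_le {r : ℝ} (hr : 0 < r) : MeasurableSet {x | anorm x ≤ r} := by
  obtain ⟨S, hS⟩ := exists_finset_ballExponent_eq_zero hr
  rw [setOf_anorm_le_eq_box hr]
  exact (isOpen_box (S.eventually_cofinite_notMem.mono hS)).measurableSet

theorem anorm_mem_Pset {x : FA} (hx : anorm x ≠ 0) : anorm x ∈ Pset := by
  unfold anorm at hx ⊢
  split_ifs at hx ⊢ with h
  · obtain ⟨p₀, hp₀⟩ : ∃ p, 0 < ‖x.1 p‖ / p := by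
      by_contra! h0
      exact hx (le_antisymm (ciSup_le h0) (Real.iSup_nonneg fun p => by positivity))
    have hfin : {p : Nat.Primes | ‖x.1 p₀‖ / p₀ ≤ ‖x.1 p‖ / p}.Finite :=
      (finite_setOf_primes_cast_le (‖x.1 p₀‖ / p₀)⁻¹).subset fun p hp => by
        have hle : ‖x.1 p₀‖ / p₀ ≤ (p : ℝ)⁻¹ :=
          hp.trans (by rw [← one_div]; exact div_le_div_of_nonneg_right (h p) p.cast_pos.le)
        exact (le_inv_comm₀ hp₀ (p.cast_pos)).mp hle
    obtain ⟨q, hq, hsup⟩ := exists_le_and_ciSup_eq (f := fun p => ‖x.1 p‖ / p) hfin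
    have hnorm : ‖(q : ℚ_[q.1]) * x.1 q‖ = ‖x.1 q‖ / q := by
      rw [norm_mul, Padic.norm_p, inv_mul_eq_div]
    rw [norm0, hsup, ← hnorm]
    refine Padic.norm_mem_Pset ?_ ?_
    · exact norm_pos_iff.mp (hnorm ▸ hp₀.trans_le hq)
    · exact hnorm ▸ ((div_lt_one (q.cast_pos)).mpr
        ((h q).trans_lt q.one_lt_cast)).ne
  · push Not at h
    obtain ⟨p₀, hp₀⟩ := h
    have hfin : {p : Nat.Primes | ‖x.1 p₀‖ ≤ ‖x.1 p‖}.Finite :=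
      (eventually_cofinite.mp x.2).subset fun p hp => by
        simp only [Set.mem_ofPred_eq] at hp ⊢
        linarith
    obtain ⟨q, hq, hsup⟩ := exists_le_and_ciSup_eq (f := fun p => ‖x.1 p‖) hfin
    rw [norm1, hsup]
    exact Padic.norm_mem_Pset (norm_pos_iff.mp (by linarith)) (by linarith)

theorem setOf_anorm_eq_eq_diff {r : ℝ} (hr : r ∈ Pset) :
    {x : FA | anorm x = r} = {x | anorm x ≤ r} \ {x | anorm x ≤ nminus r} := by
  obtain ⟨⟨hmP, hmr⟩, hmax⟩ := isGreatest_nminus (Pset_pos hr)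
  ext x
  simp only [Set.mem_ofPred_eq, Set.mem_sdiff, not_le]
  refine ⟨fun h => ⟨h.le, h ▸ hmr⟩, fun ⟨hle, hgt⟩ => hle.eq_of_not_lt fun hlt => ?_⟩
  rcases eq_or_ne (anorm x) 0 with h0 | h0
  · linarith [Pset_pos hmP]
  · exact (hmax ⟨anorm_mem_Pset h0, hlt⟩).not_gt hgt

end FA

theorem stmt_9_general (μ : Measure FA) (hinv : μ.IsAddLeftInvariant)
    (hone : μ unitBall = 1)
    (r : ℝ) (hr : r ∈ Pset) :
    μ {x : FA | anorm x ≤ r} = ENNReal.ofReal (Phi r) ∧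
    μ {x : FA | anorm x = r} = ENNReal.ofReal (Phi r - Phi (nminus r)) := by
  have hr0 := Pset_pos hr
  obtain ⟨⟨hmP, hmr⟩, -⟩ := isGreatest_nminus hr0
  have hm0 := Pset_pos hmP
  have hball := FA.measure_setOf_anorm_le μ hone hr0
  have hball' := FA.measure_setOf_anorm_le μ hone hm0
  have hsub : {x : FA | anorm x ≤ nminus r} ⊆ {x | anorm x ≤ r} := fun _ hx => le_trans hx hmr.le
  refine ⟨hball, ?_⟩
  rw [FA.setOf_anorm_eq_eq_diff hr,
    measure_sdiff hsub (FA.measurableSet_setOf_anorm_le hm0).nullMeasurableSet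
      (hball' ▸ ENNReal.ofReal_ne_top),
    hball, hball', ENNReal.ofReal_sub _ (Phi_nonneg _)]

/-- For the Haar measure on `𝔸_f` normalized by `μ(∏_p ℤ_p) = 1`, the ball of radius
`r ∈ P` has volume `Φ(r)` and the sphere of radius `r` has volume `Φ(r) − Φ(r₋)`. -/
theorem stmt_9 (μ : Measure FA) (hinv : μ.IsAddLeftInvariant) (hreg : μ.Regular)
    (hone : μ unitBall = 1)
    (r : ℝ) (hr : r ∈ Pset) :
    μ {x : FA | anorm x ≤ r} = ENNReal.ofReal (Phi r) ∧
    μ {x : FA | anorm x = r} = ENNReal.ofReal (Phi r - Phi (nminus r)) :=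
  stmt_9_general μ hinv hone r hr
end
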